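/- Let n ≥ 2 and, in the group Ñ_{n,2}, let g = ∏_{1 ≤ l < k ≤ n} z_{kl} be the product of all basic commutators z_{kl} = [y_k, y_l] with 1 ≤ l < k ≤ n (these commutators are central, so the order of the factors is immaterial). Then g cannot be written as a product of fewer than 2(n−1) palindromes with respect to the generating family Y = (y_1, …, y_n). -/

import Mathlib

/-- The element of `G` represented by a word in the alphabet `X^{±1}`:
a letter `(i, true)` stands for `X i` and `(i, false)` for `(X i)⁻¹`. -/
def evalWord {G : Type*} {n : ℕ} [Group G] (X : Fin n → G) (w : List (Fin n × Bool)) : G :=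
  (w.map fun l => if l.2 then X l.1 else (X l.1)⁻¹).prod

/-- `g` is a palindrome with respect to the generating family `X` if it is represented by
some word whose sequence of letters equals its reverse. -/
def IsPalindrome {G : Type*} {n : ℕ} [Group G] (X : Fin n → G) (g : G) : Prop :=
  ∃ w : List (Fin n × Bool), w.reverse = w ∧ evalWord X w = g

/-- `g` is a product of `k` palindromes with respect to `X`. -/
def IsPalProd {G : Type*} {n : ℕ} [Group G] (X : Fin n → G) (k : ℕ) (g : G) : Prop :=
  ∃ f : Fin k → G, (∀ i, IsPalindrome X (f i)) ∧ (List.ofFn f).prod = g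

/-- The palindromic length of `g` with respect to `X`, valued in `ℕ∞`. -/
noncomputable def palLength {G : Type*} {n : ℕ} [Group G] (X : Fin n → G) (g : G) : ℕ∞ :=
  sInf {k : ℕ∞ | ∃ m : ℕ, k = (m : ℕ∞) ∧ IsPalProd X m g}

/-- The palindromic width of `G` with respect to `X`, valued in `ℕ∞`. -/
noncomputable def palWidth {G : Type*} {n : ℕ} [Group G] (X : Fin n → G) : ℕ∞ :=
  ⨆ g : G, palLength X g

/-- The free nilpotent group `N_{n,r}` of rank `n` and step `r`: the quotient of the free
group on `n` generators by `γ_{r+1} = lowerCentralSeries _ r` (indices: `γ_1` is the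
whole group and corresponds to index `0`). -/
abbrev FreeNilpotent (n r : ℕ) :=
  FreeGroup (Fin n) ⧸ (⊤ : Subgroup (FreeGroup (Fin n))).lowerCentralSeries r

/-- The images `x_1, …, x_n` of the free basis in `N_{n,r}`. -/
def nilGen (n r : ℕ) (i : Fin n) : FreeNilpotent n r :=
  QuotientGroup.mk (FreeGroup.of i)

/-- `Ñ_{n,r}`: the quotient of `N_{n,r}` by the normal closure of the squares of the
generators. -/
abbrev TildeNil (n r : ℕ) :=
  FreeNilpotent n r ⧸ Subgroup.normalClosure (Set.range fun i : Fin n => nilGen n r i ^ 2)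

/-- The generating family `y_1, …, y_n` of `Ñ_{n,r}`. -/
def tnGen (n r : ℕ) (i : Fin n) : TildeNil n r := QuotientGroup.mk (nilGen n r i)

/-- The commutator convention of the paper: `[a, b] = a⁻¹ b⁻¹ a b`. -/
def pcomm {G : Type*} [Group G] (a b : G) : G := a⁻¹ * b⁻¹ * a * b

/-- The list of all pairs `(k, l)` of indices with `l < k`, used to order the product of all
basic commutators `z_{kl}` (which are central in `Ñ_{n,2}`, so the order is immaterial). -/
def pairList (n : ℕ) : List (Fin n × Fin n) :=
  (List.finRange n).flatMap fun k => ((List.finRange n).filter fun l => l < k).map fun l => (k, l)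

/-! The generators `y_i` of `Ñ_{n,2}` are involutions, so every palindrome is `1` or conjugate
to some `y_i`. Write `g` as a product of `m` palindromes and count, for each `i`, the factors
conjugate to `y_i`. The sign character `y_j ↦ (-1)^[j = i]` kills `g`, so this count is even.
Sending `y_k, y_l` to two reflections generating `D_4` and the other generators to `1` maps `g`
to the central rotation `r 2 ≠ 1`, so the counts for `k` and `l` cannot both vanish. Hence all
counts but at most one are at least `2`, and `m ≥ 2(n-1)`. -/

open Finset DihedralGroup

theorem two_mul_card_pred_le_sum {ι : Type*} [Fintype ι] (c : ι → ℕ) (heven : ∀ i, Even (c i))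
    (hzero : ∀ k l, c k = 0 → c l = 0 → k = l) : 2 * (Fintype.card ι - 1) ≤ ∑ i, c i := by
  classical
  have two_le : ∀ i, c i ≠ 0 → 2 ≤ c i := fun i hi => by
    obtain ⟨r, hr⟩ := heven i
    omega
  by_cases h : ∃ i₀, c i₀ = 0
  · obtain ⟨i₀, hi₀⟩ := h
    calc 2 * (Fintype.card ι - 1) = ∑ _i ∈ univ.erase i₀, 2 := by
          simp [mul_comm]
      _ ≤ ∑ i ∈ univ.erase i₀, c i :=
          sum_le_sum fun i hi => two_le i fun hi' => ne_of_mem_erase hi (hzero i i₀ hi' hi₀)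
      _ ≤ ∑ i, c i := sum_le_sum_of_subset (erase_subset _ _)
  · calc 2 * (Fintype.card ι - 1) ≤ ∑ _i : ι, 2 := by simp; omega
      _ ≤ ∑ i, c i := sum_le_sum fun i _ => two_le i fun hi => h ⟨i, hi⟩

theorem two_mul_card_pred_le_card {α ι : Type*} [Fintype α] [Fintype ι] [DecidableEq ι]
    (idx : α → Option ι) (heven : ∀ i, Even #{a | idx a = some i})
    (hcover : ∀ k l, k ≠ l → ∃ a, idx a = some k ∨ idx a = some l) :
    2 * (Fintype.card ι - 1) ≤ Fintype.card α := by
  have hzero (k l : ι) (hk : #{a | idx a = some k} = 0) (hl : #{a | idx a = some l} = 0) :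
      k = l := by
    by_contra hkl
    obtain ⟨a, ha | ha⟩ := hcover k l hkl
    · exact filter_eq_empty_iff.mp (card_eq_zero.mp hk) (mem_univ a) ha
    · exact filter_eq_empty_iff.mp (card_eq_zero.mp hl) (mem_univ a) ha
  calc 2 * (Fintype.card ι - 1) ≤ ∑ i, #{a | idx a = some i} :=
        two_mul_card_pred_le_sum _ heven hzero
    _ = #{a | idx a ∈ univ.map .some} := by
        rw [← sum_card_fiberwise_eq_card_filter, sum_map]
        rfl
    _ ≤ Fintype.card α := card_le_univ _

section Palindromes

variable {G : Type*} [Group G] {n : ℕ}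

theorem evalWord_append (X : Fin n → G) (u v : List (Fin n × Bool)) :
    evalWord X (u ++ v) = evalWord X u * evalWord X v := by
  simp [evalWord]

theorem evalWord_singleton_of_inv_eq {X : Fin n → G} (hX : ∀ i, (X i)⁻¹ = X i)
    (a : Fin n × Bool) : evalWord X [a] = X a.1 := by
  cases a.2 <;> simp [evalWord, hX]

theorem IsPalindrome.exists_isConj {X : Fin n → G} (hX : ∀ i, (X i)⁻¹ = X i) {g : G}
    (hg : IsPalindrome X g) : ∃ o : Option (Fin n), IsConj (o.elim 1 X) g := by
  obtain ⟨w, hw, rfl⟩ := hg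
  induction List.Palindrome.of_reverse_eq hw with
  | nil => exact ⟨none, .refl _⟩
  | singleton a => exact ⟨some a.1, by rw [evalWord_singleton_of_inv_eq hX]; rfl⟩
  | @cons_concat a w hw' ih =>
    obtain ⟨o, ho⟩ := ih hw'.reverse_eq
    refine ⟨o, ho.trans (isConj_iff.mpr ⟨X a.1, ?_⟩)⟩
    rw [← List.singleton_append, evalWord_append, evalWord_append,
      evalWord_singleton_of_inv_eq hX, hX, mul_assoc]

end Palindromes

theorem Subgroup.lowerCentralSeries_le_ker {K G : Type*} [Group K] [Group G] (φ : K →* G)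
    {r : ℕ} (h : (⊤ : Subgroup G).lowerCentralSeries r = ⊥) :
    (⊤ : Subgroup K).lowerCentralSeries r ≤ φ.ker := by
  rw [← Subgroup.map_eq_bot_iff, Subgroup.map_lowerCentralSeries, ← le_bot_iff, ← h]
  exact Subgroup.lowerCentralSeries_mono r le_top

theorem pcomm_eq_one_of_commute {G : Type*} [Group G] {a b : G} (h : Commute a b) :
    pcomm a b = 1 := by
  rw [pcomm, mul_assoc, h.eq, ← mul_inv_rev, inv_mul_cancel]

theorem map_pcomm {G H : Type*} [Group G] [Group H] (φ : G →* H) (a b : G) :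
    φ (pcomm a b) = pcomm (φ a) (φ b) := by
  simp [pcomm]

namespace TildeNil

variable {n : ℕ} {G : Type*} [Group G]

theorem tnGen_sq (i : Fin n) : tnGen n 2 i ^ 2 = 1 :=
  (QuotientGroup.eq_one_iff _).mpr (Subgroup.subset_normalClosure ⟨i, rfl⟩)

theorem tnGen_inv (i : Fin n) : (tnGen n 2 i)⁻¹ = tnGen n 2 i :=
  inv_eq_of_mul_eq_one_right (by rw [← sq, tnGen_sq])

def lift (f : Fin n → G) (hf : ∀ i, f i ^ 2 = 1) (hG : commutator G ≤ Subgroup.center G) :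
    TildeNil n 2 →* G :=
  QuotientGroup.lift _
    (QuotientGroup.lift _ (FreeGroup.lift f) (Subgroup.lowerCentralSeries_le_ker _
      (Subgroup.lowerCentralSeries_succ_eq_bot ⊤ hG)))
    (Subgroup.normalClosure_le_normal (by
      rintro _ ⟨i, rfl⟩
      rw [SetLike.mem_coe, MonoidHom.mem_ker, map_pow]
      exact (congrArg (· ^ 2) FreeGroup.lift_apply_of).trans (hf i)))

@[simp]
theorem lift_tnGen (f : Fin n → G) (hf : ∀ i, f i ^ 2 = 1)
    (hG : commutator G ≤ Subgroup.center G) (i : Fin n) : lift f hf hG (tnGen n 2 i) = f i :=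
  FreeGroup.lift_apply_of

end TildeNil

theorem mem_pairList {n : ℕ} {q : Fin n × Fin n} : q ∈ pairList n ↔ q.2 < q.1 := by
  simp [pairList, Prod.ext_iff, and_comm]

theorem nodup_pairList (n : ℕ) : (pairList n).Nodup := by
  refine List.nodup_flatMap.mpr ⟨fun k _ => ((List.nodup_finRange n).filter _).map
    fun _ _ h => (Prod.ext_iff.mp h).2, (List.pairwise_lt_finRange n).imp fun hkl => ?_⟩
  simp only [Function.onFun, List.disjoint_left, List.mem_map, List.mem_filter, Prod.ext_iff]
  rintro _ ⟨_, -, rfl, -⟩ ⟨_, -, h, -⟩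
  exact hkl.ne' h

theorem commutator_le_center_dihedralGroup_four :
    commutator (DihedralGroup 4) ≤ Subgroup.center (DihedralGroup 4) := by
  have key : ∀ a b g : DihedralGroup 4, g * (a * b * a⁻¹ * b⁻¹) = a * b * a⁻¹ * b⁻¹ * g := by
    decide
  rw [commutator_def, Subgroup.commutator_le]
  exact fun a _ b _ => Subgroup.mem_center_iff.mpr (key a b)

namespace TildeNil

variable {n : ℕ}

def commProd (n : ℕ) : TildeNil n 2 :=
  ((pairList n).map fun q => pcomm (tnGen n 2 q.1) (tnGen n 2 q.2)).prod

def parity (i : Fin n) : TildeNil n 2 →* ℤˣ :=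
  lift (fun j => if j = i then -1 else 1) (fun j => by split_ifs <;> simp)
    (by simp [Subgroup.center_eq_top])

def toDihedral (k l : Fin n) : TildeNil n 2 →* DihedralGroup 4 :=
  lift (fun j => if j = k then sr 0 else if j = l then sr 1 else 1)
    (fun j => by split_ifs <;> simp [sq]) commutator_le_center_dihedralGroup_four

theorem parity_commProd (i : Fin n) : parity i (commProd n) = 1 := by
  rw [commProd, map_list_prod, List.map_map]
  refine List.prod_eq_one fun x hx => ?_
  obtain ⟨q, -, rfl⟩ := List.mem_map.mp hx
  exact (map_pcomm _ _ _).trans (pcomm_eq_one_of_commute (Commute.all _ _))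

theorem toDihedral_commProd {k l : Fin n} (h : l < k) : toDihedral k l (commProd n) = r 2 := by
  rw [commProd, map_list_prod, List.map_map, List.prod_map_eq_pow_single (k, l)]
  · rw [@List.count_eq_one_of_mem _ instBEqOfDecidableEq _ _ _ (nodup_pairList n)
      (mem_pairList (q := (k, l)) |>.mpr h)]
    simp only [toDihedral, Function.comp_apply, map_pcomm, lift_tnGen, ↓reduceIte, h.ne,
      pow_one]
    decide
  · rintro ⟨a, b⟩ hab hmem
    have hba : b < a := mem_pairList.mp hmem
    have hone : ∀ j, j ≠ k → j ≠ l → toDihedral k l (tnGen n 2 j) = 1 := by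
      intro j hjk hjl
      simp [toDihedral, hjk, hjl]
    simp only [Function.comp_apply, map_pcomm]
    obtain ⟨hak, hal⟩ | ⟨hbk, hbl⟩ : (a ≠ k ∧ a ≠ l) ∨ (b ≠ k ∧ b ≠ l) := by grind
    · rw [hone a hak hal]
      exact pcomm_eq_one_of_commute (.one_left _)
    · rw [hone b hbk hbl]
      exact pcomm_eq_one_of_commute (.one_right _)

section Factorization

variable {m : ℕ} {p : Fin m → TildeNil n 2} {idx : Fin m → Option (Fin n)}

theorem even_card_filter_idx_eq (hidx : ∀ t, IsConj ((idx t).elim 1 (tnGen n 2)) (p t))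
    (hprod : (List.ofFn p).prod = commProd n) (i : Fin n) : Even #{t | idx t = some i} := by
  have hp : ∀ t, parity i (p t) = if idx t = some i then -1 else 1 := by
    intro t
    rw [← isConj_iff_eq.mp ((parity i).map_isConj (hidx t))]
    cases idx t <;> simp [parity]
  have hsign := congrArg (parity i) hprod
  rw [map_list_prod, List.map_ofFn, List.prod_ofFn, parity_commProd] at hsign
  simp only [Function.comp_apply, hp, prod_ite, prod_const, one_pow, mul_one] at hsign
  exact (neg_one_pow_eq_one_iff_even (by decide)).mp hsign

theorem exists_idx_eq_some_of_lt (hidx : ∀ t, IsConj ((idx t).elim 1 (tnGen n 2)) (p t))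
    (hprod : (List.ofFn p).prod = commProd n) {k l : Fin n} (h : l < k) :
    ∃ t, idx t = some k ∨ idx t = some l := by
  by_contra! hkl
  have hp : ∀ t, toDihedral k l (p t) = 1 := by
    intro t
    refine isConj_one_right.mp ?_
    convert (toDihedral k l).map_isConj (hidx t)
    rcases hj : idx t with _ | j
    · simp
    · have := hkl t
      simp_all [toDihedral]
  have hdih := congrArg (toDihedral k l) hprod
  rw [map_list_prod, List.map_ofFn, toDihedral_commProd h] at hdih
  simp only [Function.comp_def, hp, List.ofFn_const, List.prod_replicate, one_pow] at hdih
  exact absurd hdih.symm (by decide)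

end Factorization

end TildeNil


open TildeNil in
theorem prod_commutators_not_short_palProd_general (n : ℕ) :
    ∀ m : ℕ, m < 2 * (n - 1) →
      ¬ IsPalProd (tnGen n 2) m
          (((pairList n).map fun q => pcomm (tnGen n 2 q.1) (tnGen n 2 q.2)).prod) := by
  rintro m hm ⟨p, hpal, hprod⟩
  choose idx hidx using fun t => (hpal t).exists_isConj tnGen_inv
  have hcover : ∀ k l, k ≠ l → ∃ t, idx t = some k ∨ idx t = some l := by
    intro k l hkl
    rcases hkl.lt_or_gt with h | h
    · simpa only [or_comm] using exists_idx_eq_some_of_lt hidx hprod h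
    · exact exists_idx_eq_some_of_lt hidx hprod h
  have := two_mul_card_pred_le_card idx (even_card_filter_idx_eq hidx hprod) hcover
  simp only [Fintype.card_fin] at this
  omega

/-- For `n ≥ 2`, the product `g = ∏_{1 ≤ l < k ≤ n} z_{kl}` of all basic commutators
`z_{kl} = [y_k, y_l]` in `Ñ_{n,2}` is not a product of fewer than `2(n-1)` palindromes. -/
theorem prod_commutators_not_short_palProd (n : ℕ) (hn : 2 ≤ n) :
    ∀ m : ℕ, m < 2 * (n - 1) →
      ¬ IsPalProd (tnGen n 2) m
          (((pairList n).map fun q => pcomm (tnGen n 2 q.1) (tnGen n 2 q.2)).prod) :=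
  prod_commutators_not_short_palProd_general n
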